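/- Let A, Ã ∈ so(3) (real skew-symmetric 3×3 matrices). Then (1/8)‖A‖²‖Ã‖² ≤ ‖dev sym(A·Ã)‖² ≤ (1/6)‖A‖²‖Ã‖², where A·Ã is the matrix product. -/

import Mathlib

open Matrix MeasureTheory

noncomputable section

abbrev M3 := Matrix (Fin 3) (Fin 3) ℝ
abbrev V3 := Fin 3 → ℝ

def sym3 (X : M3) : M3 := (1/2 : ℝ) • (X + Xᵀ)
def dev3 (X : M3) : M3 := X - ((1/3 : ℝ) * Matrix.trace X) • (1 : M3)
def Anti3 (a : V3) : M3 := !![0, -a 2, a 1; a 2, 0, -a 0; -a 1, a 0, 0]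
def frobSq (X : M3) : ℝ := ∑ i, ∑ j, (X i j)^2
def frobNorm (X : M3) : ℝ := Real.sqrt (frobSq X)
def vnormSq (a : V3) : ℝ := ∑ i, (a i)^2

def pd (k : Fin 3) (f : V3 → ℝ) (x : V3) : ℝ := fderiv ℝ f x (Pi.single k 1)

def Curl3 (P : V3 → M3) (x : V3) : M3 :=
  Matrix.of fun i j =>
    ![pd 1 (fun y => P y i 2) x - pd 2 (fun y => P y i 1) x,
      pd 2 (fun y => P y i 0) x - pd 0 (fun y => P y i 2) x,
      pd 0 (fun y => P y i 1) x - pd 1 (fun y => P y i 0) x] j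

def Jac3 (u : V3 → V3) (x : V3) : M3 :=
  Matrix.of fun i j => pd j (fun y => u y i) x

def lpM (q : ℝ) (Q : V3 → M3) : ℝ := (∫ x : V3, frobNorm (Q x) ^ q) ^ (1/q)
def lpV (q : ℝ) (a : V3 → V3) : ℝ := (∫ x : V3, Real.sqrt (vnormSq (a x)) ^ q) ^ (1/q)

/-!
A skew-symmetric `A` is the cross-product matrix of its axial vector `a`, with `‖A‖² = 2|a|²`, and
for two of them `A Ã = b aᵀ - (a ⬝ b) 𝟙`. Hence `sym (A Ã) = (a bᵀ + b aᵀ)/2 - (a ⬝ b) 𝟙` and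
`‖dev sym (A Ã)‖² = |a|²|b|²/2 + (a ⬝ b)²/6`, which lies between `|a|²|b|²/2` and `2|a|²|b|²/3` by
Cauchy–Schwarz.
-/

lemma eq_anti3_of_transpose_eq_neg {A : M3} (hA : Aᵀ = -A) :
    A = Anti3 ![A 2 1, A 0 2, A 1 0] := by
  have h : ∀ i j, A j i = -A i j := fun i j => congrFun (congrFun hA i) j
  ext i j
  fin_cases i <;> fin_cases j <;> simp [Anti3] <;>
    linarith [h 0 0, h 1 1, h 2 2, h 0 1, h 0 2, h 1 2]

lemma frobSq_anti3 (a : V3) : frobSq (Anti3 a) = 2 * vnormSq a := by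
  simp only [frobSq, vnormSq, Anti3, Fin.sum_univ_three, of_apply, cons_val', cons_val_fin_one,
    cons_val_zero, cons_val_one, cons_val]
  ring

lemma anti3_mul_anti3 (a b : V3) :
    Anti3 a * Anti3 b = vecMulVec b a - (a ⬝ᵥ b) • (1 : M3) := by
  ext i j
  fin_cases i <;> fin_cases j <;>
    simp [Anti3, Matrix.mul_apply, vecMulVec_apply, dotProduct, Fin.sum_univ_three] <;> ring

lemma trace_sym3 (X : M3) : trace (sym3 X) = trace X := by
  simp only [sym3, trace_smul, trace_add, trace_transpose, smul_eq_mul]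
  ring

lemma frobSq_dev3 (X : M3) : frobSq (dev3 X) = frobSq X - trace X ^ 2 / 3 := by
  simp only [frobSq, dev3, trace, diag_apply, Fin.sum_univ_three, Matrix.sub_apply,
    Matrix.smul_apply, one_apply, smul_eq_mul,
    Fin.reduceEq, ↓reduceIte, mul_ite, mul_one, mul_zero, sub_zero]
  ring

lemma frobSq_sym3_vecMulVec_sub_smul_one (a b : V3) (c : ℝ) :
    frobSq (sym3 (vecMulVec b a - c • (1 : M3))) =
      (vnormSq a * vnormSq b + (a ⬝ᵥ b) ^ 2) / 2 - 2 * c * (a ⬝ᵥ b) + 3 * c ^ 2 := by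
  simp only [frobSq, sym3, vnormSq, dotProduct, Fin.sum_univ_three, transpose_sub,
    transpose_vecMulVec, transpose_smul, transpose_one, Matrix.smul_apply, Matrix.add_apply,
    Matrix.sub_apply, vecMulVec_apply, one_apply, smul_eq_mul,
    Fin.reduceEq, ↓reduceIte, mul_ite, mul_one, mul_zero, sub_zero]
  ring

lemma frobSq_dev3_sym3_anti3_mul_anti3 (a b : V3) :
    frobSq (dev3 (sym3 (Anti3 a * Anti3 b))) =
      vnormSq a * vnormSq b / 2 + (a ⬝ᵥ b) ^ 2 / 6 := by
  have htrace : trace (Anti3 a * Anti3 b) = -2 * (a ⬝ᵥ b) := by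
    rw [anti3_mul_anti3, trace_sub, trace_smul, trace_one, trace_vecMulVec, dotProduct_comm,
      Fintype.card_fin, smul_eq_mul]
    ring
  rw [frobSq_dev3, trace_sym3, htrace, anti3_mul_anti3, frobSq_sym3_vecMulVec_sub_smul_one]
  ring

lemma sq_dotProduct_le_vnormSq_mul (a b : V3) : (a ⬝ᵥ b) ^ 2 ≤ vnormSq a * vnormSq b :=
  Finset.sum_mul_sq_le_sq_mul_sq _ _ _

/-- For skew-symmetric A, Ã ∈ so(3),
(1/8)‖A‖²‖Ã‖² ≤ ‖dev sym(A·Ã)‖² ≤ (1/6)‖A‖²‖Ã‖² (Frobenius norms). -/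
theorem stmt1 (A Atil : M3) (hA : Aᵀ = -A) (hAtil : Atilᵀ = -Atil) :
    (1/8) * frobSq A * frobSq Atil ≤ frobSq (dev3 (sym3 (A * Atil))) ∧
    frobSq (dev3 (sym3 (A * Atil))) ≤ (1/6) * frobSq A * frobSq Atil := by
  rw [eq_anti3_of_transpose_eq_neg hA, eq_anti3_of_transpose_eq_neg hAtil]
  set a : V3 := ![A 2 1, A 0 2, A 1 0]
  set b : V3 := ![Atil 2 1, Atil 0 2, Atil 1 0]
  rw [frobSq_dev3_sym3_anti3_mul_anti3, frobSq_anti3, frobSq_anti3]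
  have hcs := sq_dotProduct_le_vnormSq_mul a b
  constructor <;> linarith [sq_nonneg (a ⬝ᵥ b)]
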